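/- arXiv:2112.05363 — 3 statements merged into one kernel-verified Lean document; each statement's English description precedes it below -/
import Mathlib

section
/- Let Π̄, Π be symmetric n×n matrices with 0 ⪯ Π̄ ⪯ Π (Loewner order), and for a fixed positive semidefinite-valued matrix function define the operators T_Π̄(X) and T_Π(X) mapping a PSD matrix X to a weighted average of G(ω)(Π̄ ∘ X)G(ω)^H (respectively with Π). Then ρ(T_Π̄) ≤ ρ(T_Π). -/
open Matrix MeasureTheory
open scoped ComplexOrder

attribute [local instance] Matrix.normedAddCommGroup Matrix.normedSpace

/-!
Both operators are positive maps (Schur product theorem), and so is their difference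
`T_Π - T_Π̄ = T_{Π - Π̄}`. By induction, `0 ⪯ T_Π̄ᵏ X ⪯ T_Πᵏ X` for every `X ⪰ 0`. In the
C⋆-algebra of matrices `0 ≤ a ≤ b` forces `‖a‖ ≤ ‖b‖`, and every matrix is a combination of
four positive matrices of no larger norm, hence `‖T_Π̄ᵏ‖ ≤ 4 ‖T_Πᵏ‖` for all `k`.
Taking `k`-th roots, Gelfand's formula gives `ρ(T_Π̄) ≤ ρ(T_Π)`.
-/

open Filter Topology
open scoped NNReal ENNReal

theorem ENNReal.tendsto_coe_rpow_one_div_nhds_one {C : ℝ≥0} (hC : C ≠ 0) :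
    Tendsto (fun k : ℕ => (C : ℝ≥0∞) ^ (1 / k : ℝ)) atTop (𝓝 1) := by
  have hreal : Tendsto (fun k : ℕ => (C : ℝ) ^ (1 / k : ℝ)) atTop (𝓝 1) := by
    simpa [Function.comp_def] using
      (Real.continuousAt_const_rpow (NNReal.coe_ne_zero.mpr hC)).tendsto.comp
        tendsto_one_div_atTop_nhds_zero_nat
  rw [← ENNReal.ofReal_one]
  refine (ENNReal.tendsto_ofReal hreal).congr fun k => ?_
  rw [← ENNReal.ofReal_rpow_of_nonneg C.coe_nonneg (by positivity), ENNReal.ofReal_coe_nnreal]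

theorem spectralRadius_le_of_nnnorm_pow_le_mul {A : Type*} [NormedRing A] [NormedAlgebra ℂ A]
    [CompleteSpace A] {a b : A} {C : ℝ≥0} (hC : C ≠ 0) (h : ∀ k : ℕ, ‖a ^ k‖₊ ≤ C * ‖b ^ k‖₊) :
    spectralRadius ℂ a ≤ spectralRadius ℂ b := by
  have hlim := ENNReal.Tendsto.mul (ENNReal.tendsto_coe_rpow_one_div_nhds_one hC)
    (.inl one_ne_zero) (spectrum.gelfand_formula b) (.inr ENNReal.one_ne_top)
  rw [one_mul] at hlim
  refine le_of_tendsto_of_tendsto' (spectrum.gelfand_formula a) hlim fun k => ?_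
  rw [← ENNReal.mul_rpow_of_nonneg _ _ (by positivity)]
  exact ENNReal.rpow_le_rpow (mod_cast h k) (by positivity)

namespace ContinuousLinearMap

section OrderedModule

variable {R E : Type*} [Semiring R] [AddCommGroup E] [PartialOrder E] [IsOrderedAddMonoid E]
  [TopologicalSpace E] [Module R E]

theorem monotone_of_nonneg {T : E →L[R] E} (hT : ∀ x, 0 ≤ x → 0 ≤ T x) : Monotone T :=
  fun x y hxy => by simpa [sub_nonneg] using hT (y - x) (sub_nonneg.mpr hxy)

theorem pow_apply_nonneg_and_le {S T : E →L[R] E} (hS : ∀ x, 0 ≤ x → 0 ≤ S x)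
    (hST : ∀ x, 0 ≤ x → S x ≤ T x) (k : ℕ) {x : E} (hx : 0 ≤ x) :
    0 ≤ (S ^ k) x ∧ (S ^ k) x ≤ (T ^ k) x := by
  have hT : Monotone T := monotone_of_nonneg fun y hy => (hS y hy).trans (hST y hy)
  induction k with
  | zero => simpa using hx
  | succ k ih =>
    obtain ⟨hSk, hSkT⟩ := ih
    rw [pow_succ', pow_succ']
    exact ⟨hS _ hSk, (hST _ hSk).trans (hT hSkT)⟩

end OrderedModule

theorem opNorm_le_four_mul_of_norm_apply_le {A B : Type*}
    [NonUnitalCStarAlgebra A] [PartialOrder A] [StarOrderedRing A]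
    [SeminormedAddCommGroup B] [NormedSpace ℂ B] {S T : A →L[ℂ] B}
    (h : ∀ a, 0 ≤ a → ‖S a‖ ≤ ‖T a‖) : ‖S‖ ≤ 4 * ‖T‖ := by
  refine S.opNorm_le_bound (by positivity) fun a => ?_
  obtain ⟨x, hx_nonneg, hx_norm, hax⟩ := CStarAlgebra.exists_sum_four_nonneg a
  calc ‖S a‖ ≤ ∑ i, ‖S (x i)‖ := by
        rw [hax, map_sum]
        refine (norm_sum_le _ _).trans_eq ?_
        simp [norm_smul]
    _ ≤ ∑ _i : Fin 4, ‖T‖ * ‖a‖ := by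
        gcongr with i
        exact (h _ (hx_nonneg i)).trans (T.le_opNorm_of_le (hx_norm i))
    _ = 4 * ‖T‖ * ‖a‖ := by simp [mul_assoc]

end ContinuousLinearMap

theorem spectralRadius_le_of_nonneg_le {A : Type*} [NonUnitalCStarAlgebra A] [PartialOrder A]
    [StarOrderedRing A] {S T : A →L[ℂ] A} (hS : ∀ a, 0 ≤ a → 0 ≤ S a)
    (hST : ∀ a, 0 ≤ a → S a ≤ T a) : spectralRadius ℂ S ≤ spectralRadius ℂ T := by
  refine spectralRadius_le_of_nnnorm_pow_le_mul (C := 4) four_ne_zero fun k => ?_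
  have hpow (a : A) (ha : 0 ≤ a) : ‖(S ^ k) a‖ ≤ ‖(T ^ k) a‖ :=
    have ⟨h0, hle⟩ := ContinuousLinearMap.pow_apply_nonneg_and_le hS hST k ha
    CStarAlgebra.norm_le_norm_of_nonneg_of_le h0 hle
  exact_mod_cast (S ^ k).opNorm_le_four_mul_of_norm_apply_le hpow

open scoped MatrixOrder

namespace Matrix

variable {ι : Type*} [Fintype ι]

theorem intervalIntegral_nonneg {f : ℝ → Matrix ι ι ℂ} {a b : ℝ} (hab : a ≤ b)
    (hf : ∀ x, 0 ≤ f x) : 0 ≤ ∫ x in a..b, f x := by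
  classical
  -- The positive semidefinite cone is closed: borrow this from the C⋆-algebra structure of the
  -- L2 operator norm, whose topology is the entrywise one used by the integral.
  have : @OrderClosedTopology (Matrix ι ι ℂ)
      Matrix.normedAddCommGroup.toUniformSpace.toTopologicalSpace _ :=
    ⟨isClosed_le_of_isClosed_nonneg <| by
      let _ := Matrix.instCStarAlgebra (n := ι)
      exact CStarAlgebra.isClosed_nonneg⟩
  rw [intervalIntegral.integral_of_le hab]
  exact integral_nonneg hf

/-- `hadamardConjAverage G Π X` is `T_Π(X)`. -/
noncomputable def hadamardConjAverage (G : ℝ → Matrix ι ι ℂ) (P X : Matrix ι ι ℂ) :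
    Matrix ι ι ℂ :=
  (1 / (2 * (Real.pi : ℂ))) • ∫ ω in (-Real.pi)..Real.pi, G ω * hadamard P X * (G ω)ᴴ

variable {G : ℝ → Matrix ι ι ℂ}

theorem hadamardConjAverage_nonneg {P X : Matrix ι ι ℂ} (hP : 0 ≤ P) (hX : 0 ≤ X) :
    0 ≤ hadamardConjAverage G P X := by
  have hc : (0 : ℂ) ≤ 1 / (2 * (Real.pi : ℂ)) := by
    have : 1 / (2 * (Real.pi : ℂ)) = ((1 / (2 * Real.pi) : ℝ) : ℂ) := by push_cast; ring
    rw [this, Complex.zero_le_real]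
    positivity
  refine smul_nonneg hc (intervalIntegral_nonneg (by linarith [Real.pi_pos]) fun ω => ?_)
  exact star_right_conjugate_nonneg (hP.posSemidef.hadamard hX.posSemidef).nonneg (G ω)

theorem hadamardConjAverage_add_left (hG : Continuous G) (P Q X : Matrix ι ι ℂ) :
    hadamardConjAverage G (P + Q) X = hadamardConjAverage G P X + hadamardConjAverage G Q X := by
  have hcont (R : Matrix ι ι ℂ) : Continuous fun ω => G ω * hadamard R X * (G ω)ᴴ :=
    (hG.matrix_mul continuous_const).matrix_mul hG.matrix_conjTranspose
  simp only [hadamardConjAverage, ← smul_add, ← intervalIntegral.integral_add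
    ((hcont P).intervalIntegrable _ _) ((hcont Q).intervalIntegrable _ _),
    add_hadamard, Matrix.mul_add, Matrix.add_mul]

theorem hadamardConjAverage_mono_left (hG : Continuous G) {P Q X : Matrix ι ι ℂ} (hPQ : P ≤ Q)
    (hX : 0 ≤ X) : hadamardConjAverage G P X ≤ hadamardConjAverage G Q X := by
  rw [← add_sub_cancel P Q, hadamardConjAverage_add_left hG]
  exact le_add_of_nonneg_right (hadamardConjAverage_nonneg (sub_nonneg.mpr hPQ) hX)

end Matrix

theorem spectral_radius_monotone_in_correlation {n : ℕ}
    (G : ℝ → Matrix (Fin n) (Fin n) ℂ) (hG : Continuous G)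
    (Pib Pim : Matrix (Fin n) (Fin n) ℂ)
    (hPib : Pib.PosSemidef) (hle : (Pim - Pib).PosSemidef)
    (T₁ T₂ : Matrix (Fin n) (Fin n) ℂ →L[ℂ] Matrix (Fin n) (Fin n) ℂ)
    (hT₁ : ∀ X : Matrix (Fin n) (Fin n) ℂ,
      T₁ X = (1 / (2 * (Real.pi : ℂ))) •
        ∫ ω in (-Real.pi)..Real.pi, G ω * Matrix.hadamard Pib X * (G ω)ᴴ)
    (hT₂ : ∀ X : Matrix (Fin n) (Fin n) ℂ,
      T₂ X = (1 / (2 * (Real.pi : ℂ))) •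
        ∫ ω in (-Real.pi)..Real.pi, G ω * Matrix.hadamard Pim X * (G ω)ᴴ) :
    spectralRadius ℂ T₁ ≤ spectralRadius ℂ T₂ := by
  -- The spectral radius is purely algebraic, so we may compare in the C⋆-algebra structure of
  -- the L2 operator norm, which induces the same topology on matrices.
  let _ : CStarAlgebra (Matrix (Fin n) (Fin n) ℂ) := Matrix.instCStarAlgebra
  refine spectralRadius_le_of_nonneg_le (fun X hX => ?_) (fun X hX => ?_)
  · rw [hT₁]
    exact Matrix.hadamardConjAverage_nonneg hPib.nonneg hX
  · rw [hT₁, hT₂]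
    exact Matrix.hadamardConjAverage_mono_left hG (Matrix.le_iff.mpr hle) hX
end

section
/- Fix real numbers p₁ with p₁ > 1, σ₁² ≥ 0, σ₂² ≥ 0, σ₁₂ with σ₁² - 2σ₁₂ + σ₂² > 0. For K ∈ (p₁ - 1, p₁ + 1), define f(K) = [(σ₁² - 2σ₁₂)K² + 2σ₂² p₁ K + σ₂²(1 - p₁²)] / (1 - (p₁ - K)²). Then the infimum of f over (p₁ - 1, p₁ + 1) is attained at K* = p₁ - 1/p₁ and equals (σ₁² - 2σ₁₂)(p₁² - 1) + σ₂² p₁². -/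
/-!
Write `a = σ₁² - 2σ₁₂`, `b = σ₂²` and `m = a (p₁² - 1) + b p₁²`. The whole proof rests on the
polynomial identity `N(K) - m D(K) = (a + b) (p₁ K - (p₁² - 1))²` between the numerator `N` and the
denominator `D` of `f`. Since `a + b > 0` and `D > 0` on the interval, it gives `m ≤ f K` there, with
equality exactly at the root `K* = p₁ - 1/p₁` of the square.
-/

lemma numerator_sub_mul_denominator (a b p K : ℝ) :
    a * K ^ 2 + 2 * b * p * K + b * (1 - p ^ 2) - (a * (p ^ 2 - 1) + b * p ^ 2) * (1 - (p - K) ^ 2)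
      = (a + b) * (p * K - (p ^ 2 - 1)) ^ 2 := by
  ring

lemma mul_denominator_le_numerator {a b : ℝ} (hab : 0 ≤ a + b) (p K : ℝ) :
    (a * (p ^ 2 - 1) + b * p ^ 2) * (1 - (p - K) ^ 2)
      ≤ a * K ^ 2 + 2 * b * p * K + b * (1 - p ^ 2) := by
  have := numerator_sub_mul_denominator a b p K
  linarith [mul_nonneg hab (sq_nonneg (p * K - (p ^ 2 - 1)))]

lemma numerator_eq_mul_denominator_at_sub_inv (a b : ℝ) {p : ℝ} (hp : p ≠ 0) :
    a * (p - 1 / p) ^ 2 + 2 * b * p * (p - 1 / p) + b * (1 - p ^ 2)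
      = (a * (p ^ 2 - 1) + b * p ^ 2) * (1 - (p - (p - 1 / p)) ^ 2) := by
  have hroot : p * (p - 1 / p) - (p ^ 2 - 1) = 0 := by field_simp; ring
  have := numerator_sub_mul_denominator a b p (p - 1 / p)
  rw [hroot] at this
  linarith

lemma sub_one_div_mem_Ioo {p : ℝ} (hp : 1 < p) : p - 1 / p ∈ Set.Ioo (p - 1) (p + 1) := by
  have hinv : 1 / p < 1 := (div_lt_one (by linarith)).2 hp
  have : 0 < 1 / p := by positivity
  constructor <;> linarith

lemma one_sub_sq_sub_pos_of_mem_Ioo {p K : ℝ} (hK : K ∈ Set.Ioo (p - 1) (p + 1)) :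
    0 < 1 - (p - K) ^ 2 := by
  obtain ⟨hlo, hhi⟩ := hK
  nlinarith

theorem inf_attained_case_I_general (p₁ σ₁sq σ₂sq σ₁₂ : ℝ)
    (hp : p₁ > 1)
    (hpos : σ₁sq - 2 * σ₁₂ + σ₂sq > 0)
    (f : ℝ → ℝ)
    (hf : ∀ K, f K = ((σ₁sq - 2 * σ₁₂) * K ^ 2 + 2 * σ₂sq * p₁ * K + σ₂sq * (1 - p₁ ^ 2)) /
        (1 - (p₁ - K) ^ 2)) :
    (p₁ - 1 / p₁) ∈ Set.Ioo (p₁ - 1) (p₁ + 1) ∧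
    f (p₁ - 1 / p₁) = (σ₁sq - 2 * σ₁₂) * (p₁ ^ 2 - 1) + σ₂sq * p₁ ^ 2 ∧
    ∀ K ∈ Set.Ioo (p₁ - 1) (p₁ + 1), f (p₁ - 1 / p₁) ≤ f K := by
  have hmem := sub_one_div_mem_Ioo hp
  have hval : f (p₁ - 1 / p₁) = (σ₁sq - 2 * σ₁₂) * (p₁ ^ 2 - 1) + σ₂sq * p₁ ^ 2 := by
    rw [hf, div_eq_iff (one_sub_sq_sub_pos_of_mem_Ioo hmem).ne']
    exact numerator_eq_mul_denominator_at_sub_inv _ _ (by positivity)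
  refine ⟨hmem, hval, fun K hK => ?_⟩
  rw [hval, hf, le_div_iff₀ (one_sub_sq_sub_pos_of_mem_Ioo hK)]
  exact mul_denominator_le_numerator hpos.le p₁ K

theorem inf_attained_case_I (p₁ σ₁sq σ₂sq σ₁₂ : ℝ)
    (hp : p₁ > 1) (h1 : σ₁sq ≥ 0) (h2 : σ₂sq ≥ 0)
    (hpos : σ₁sq - 2 * σ₁₂ + σ₂sq > 0)
    (f : ℝ → ℝ)
    (hf : ∀ K, f K = ((σ₁sq - 2 * σ₁₂) * K ^ 2 + 2 * σ₂sq * p₁ * K + σ₂sq * (1 - p₁ ^ 2)) /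
        (1 - (p₁ - K) ^ 2)) :
    (p₁ - 1 / p₁) ∈ Set.Ioo (p₁ - 1) (p₁ + 1) ∧
    f (p₁ - 1 / p₁) = (σ₁sq - 2 * σ₁₂) * (p₁ ^ 2 - 1) + σ₂sq * p₁ ^ 2 ∧
    ∀ K ∈ Set.Ioo (p₁ - 1) (p₁ + 1), f (p₁ - 1 / p₁) ≤ f K :=
  inf_attained_case_I_general p₁ σ₁sq σ₂sq σ₁₂ hp hpos f hf
end

section
/- For real numbers a with |a| < 1 and real s₁, s₂, one has (1/2π) ∫_{-π}^{π} (e^{-iω} - s₁)(e^{iω} - s₂) / |e^{iω} - a|² dω = (1 + s₁s₂ - (s₁ + s₂)a)/(1 - a²). -/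
/-!
On the unit circle `conj z * z = 1`, so with `z = exp (ω * I)` the numerator becomes
`1 + s₁ s₂ - s₁ z - s₂ conj z`, the sum of a holomorphic and an antiholomorphic polynomial,
while `1 / |z - a|²` is `(1 - a²)⁻¹` times the Poisson kernel `(1 - a²) / |z - a|²` of the unit
disc at `a`. The Poisson integral formula evaluates the average of the kernel against such a
function at `a`, giving `(1 + s₁ s₂ - s₁ a - s₂ a) / (1 - a²)`.
-/

open Real Complex

open Metric ComplexConjugate

theorem Real.circleAverage_conj (f : ℂ → ℂ) (c : ℂ) (R : ℝ) :
    circleAverage (fun z ↦ conj (f z)) c R = conj (circleAverage f c R) := by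
  simp only [circleAverage_def, intervalIntegral.integral_of_le two_pi_pos.le, integral_conj,
    Complex.real_smul, map_mul, conj_ofReal]

theorem continuousOn_poissonKernel_sphere {c w : ℂ} {R : ℝ} (hw : w ∈ ball c R) :
    ContinuousOn (poissonKernel c w) (sphere c R) := by
  have hne : ∀ z ∈ sphere c R, ‖z - c - (w - c)‖ ^ 2 ≠ 0 := by
    intro z hz
    have : z ≠ w := fun h ↦ by
      rw [← h, mem_ball, mem_sphere.1 hz] at hw
      exact lt_irrefl R hw
    simpa [sub_eq_zero] using this
  unfold poissonKernel
  fun_prop (disch := assumption)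

theorem circleIntegrable_poissonKernel_smul {E : Type*} [NormedAddCommGroup E] [NormedSpace ℝ E]
    {f : ℂ → E} {c w : ℂ} {R : ℝ} (hf : ContinuousOn f (sphere c R)) (hw : w ∈ ball c R) :
    CircleIntegrable (fun z ↦ poissonKernel c w z • f z) c R :=
  ((continuousOn_poissonKernel_sphere hw).smul hf).circleIntegrable (pos_of_mem_ball hw).le

theorem DiffContOnCl.circleAverage_poissonKernel_smul_conj {f : ℂ → ℂ} {c w : ℂ} {R : ℝ}
    (hf : DiffContOnCl ℂ f (ball c R)) (hw : w ∈ ball c R) :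
    Real.circleAverage (fun z ↦ poissonKernel c w z • conj (f z)) c R = conj (f w) := by
  have hconj : (fun z ↦ poissonKernel c w z • conj (f z))
      = fun z ↦ conj ((poissonKernel c w • f) z) := by
    ext z
    simp [Complex.real_smul]
  rw [hconj, circleAverage_conj, hf.circleAverage_poissonKernel_smul hw]

theorem DiffContOnCl.circleAverage_poissonKernel_smul_add_conj {f g : ℂ → ℂ} {c w : ℂ} {R : ℝ}
    (hf : DiffContOnCl ℂ f (ball c R)) (hg : DiffContOnCl ℂ g (ball c R)) (hw : w ∈ ball c R) :
    Real.circleAverage (fun z ↦ poissonKernel c w z • (f z + conj (g z))) c R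
      = f w + conj (g w) := by
  have hsphere : sphere c R ⊆ closure (ball c R) := by
    rw [closure_ball c (pos_of_mem_ball hw).ne']
    exact sphere_subset_closedBall
  have hconj : ContinuousOn (fun z ↦ conj (g z)) (sphere c R) :=
    continuous_conj.comp_continuousOn (hg.continuousOn.mono hsphere)
  simp_rw [smul_add]
  rw [circleAverage_fun_add (circleIntegrable_poissonKernel_smul (hf.continuousOn.mono hsphere) hw)
    (circleIntegrable_poissonKernel_smul hconj hw)]
  exact congr_arg₂ (· + ·) (hf.circleAverage_poissonKernel_smul hw)
    (hg.circleAverage_poissonKernel_smul_conj hw)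

theorem integral_exp_mul_I_eq_two_pi_smul_circleAverage {E : Type*} [NormedAddCommGroup E]
    [NormedSpace ℝ E] (f : ℂ → E) :
    ∫ ω in (-π)..π, f (exp (ω * I)) = (2 * π) • circleAverage f 0 1 := by
  have hper : Function.Periodic (fun ω : ℝ ↦ f (exp (ω * I))) (2 * π) := fun ω ↦ by
    simp [add_mul, Complex.exp_add]
  rw [circleAverage_def, smul_inv_smul₀ two_pi_pos.ne']
  have := hper.intervalIntegral_add_eq (-π) 0
  simp only [circleMap_zero, ofReal_one, one_mul, zero_add] at this ⊢
  convert this using 2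
  ring

theorem ofReal_one_sub_sq_ne_zero {a : ℝ} (ha : |a| < 1) : (1 : ℂ) - a ^ 2 ≠ 0 := by
  exact_mod_cast (show 1 - a ^ 2 ≠ 0 by nlinarith [abs_nonneg a, sq_abs a])

theorem conj_sub_mul_sub_div_norm_sq_eq_poissonKernel_smul {a : ℝ} (ha : |a| < 1) (s₁ s₂ : ℝ)
    {z : ℂ} (hz : ‖z‖ = 1) :
    (conj z - s₁) * (z - s₂) / ((‖z - a‖ : ℝ) : ℂ) ^ 2
      = (1 - a ^ 2)⁻¹ • poissonKernel 0 a z • ((1 + s₁ * s₂ - s₁ * z) + conj (-s₂ * z)) := by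
  have hza : ((‖z - a‖ : ℝ) : ℂ) ≠ 0 := by
    have := norm_sub_norm_le z a
    rw [hz, norm_real, norm_eq_abs] at this
    exact_mod_cast (show ‖z - a‖ ≠ 0 by linarith)
  have ha2 := ofReal_one_sub_sq_ne_zero ha
  have hzz : conj z * z = 1 := by
    rw [mul_comm, mul_conj, normSq_eq_norm_sq, hz]
    norm_num
  simp only [poissonKernel_def, sub_zero, hz, norm_real, norm_eq_abs, sq_abs, Complex.real_smul,
    map_mul, map_neg, conj_ofReal]
  push_cast
  field_simp
  linear_combination hzz

theorem cross_term_integral (a s₁ s₂ : ℝ) (ha : |a| < 1) :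
    (1 / (2 * (π : ℂ))) * ∫ ω in (-π)..π,
        (Complex.exp (-ω * Complex.I) - (s₁ : ℂ)) * (Complex.exp (ω * Complex.I) - (s₂ : ℂ)) /
          ((‖Complex.exp (ω * Complex.I) - (a : ℂ)‖ : ℝ) : ℂ) ^ 2
      = (((1 + s₁ * s₂ - (s₁ + s₂) * a) / (1 - a ^ 2) : ℝ) : ℂ) := by
  have hexp_neg (ω : ℝ) : exp (-ω * I) = conj (exp (ω * I)) := by
    rw [← exp_conj]
    simp
  have ha_mem : (a : ℂ) ∈ ball (0 : ℂ) 1 := by simpa using ha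
  have ha2 := ofReal_one_sub_sq_ne_zero ha
  simp_rw [hexp_neg]
  rw [integral_exp_mul_I_eq_two_pi_smul_circleAverage
      (fun z ↦ (conj z - s₁) * (z - s₂) / ((‖z - a‖ : ℝ) : ℂ) ^ 2),
    circleAverage_congr_sphere fun z hz ↦
      conj_sub_mul_sub_div_norm_sq_eq_poissonKernel_smul ha s₁ s₂ (by simpa using hz),
    circleAverage_fun_smul,
    DiffContOnCl.circleAverage_poissonKernel_smul_add_conj (f := fun z ↦ 1 + s₁ * s₂ - s₁ * z)
      (g := fun z ↦ -s₂ * z) (Differentiable.diffContOnCl (by fun_prop))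
      (Differentiable.diffContOnCl (by fun_prop)) ha_mem]
  simp only [Complex.real_smul, map_mul, map_neg, conj_ofReal]
  push_cast
  field_simp
  ring
end
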